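/- arXiv:1112.3696 — 2 statements merged into one kernel-verified Lean document; each statement's English description precedes it below -/
import Mathlib

section
/- Let X be a compact subset of ℝ, T : X → X Borel measurable, and μ a T-invariant Borel probability measure. Assume: (i) there exists c > 0 such that for every Lipschitz f : X → ℝ, Σ_{k=1}^{∞} |Cov_f(k)| ≤ c ‖f‖_Lip² with Cov_f(k) = ∫ f·(f∘T^k) dμ − (∫ f dμ)² and ‖f‖_Lip = Lip(f) + ‖f‖_∞, and let B > 0 be such that ∫ κ(E_n(x), μ) dμ(x) ≤ B n^{−1/4} for all n, where E_n(x) = (1/n) Σ_{i<n} δ_{T^i x}; (ii) (X,T,μ) satisfies the exponential concentration inequality. Then there exists D > 0 such that for every ε > 0, every n ≥ 1, and every t > 0, the observed empirical measure Ẽ_n = (1/n) Σ_{i=0}^{n−1} δ_{y_i} satisfies μ_n ⊗ P^n(κ(Ẽ_n, μ) > (t + B)/n^{1/4} + ε) ≤ exp(−t² √n / (4 D (1 + ε²))). -/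
/-!
For an `n`-tuple `v`, the Kantorovich distance between its empirical measure and `μ` differs from
that of another tuple `w` by at most `(1/n) ∑ |v i - w i|`, as one sees by testing against each
`1`-Lipschitz function. So noise of size `ε` moves it by at most `ε`, and it is separately
`1/n`-Lipschitz: along orbits, the exponential concentration inequality makes it sub-Gaussian
with variance proxy `2C/n`. Its mean is at most `B n^{-1/4}`, and the Chernoff bound at distance
`t n^{-1/4}` from the mean gives the tail `exp(-t²√n/(4C))`, so `D = C` works.
-/

open MeasureTheory Real

noncomputable section

/-- `K` is separately Lipschitz in each of its `n` variables, with
`L j` a Lipschitz constant for the `j`-th variable. -/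
def SepLip {n : ℕ} (K : (Fin n → ℝ) → ℝ) (L : Fin n → ℝ) : Prop :=
  ∀ (x : Fin n → ℝ) (j : Fin n) (y : ℝ),
    |K x - K (Function.update x j y)| ≤ L j * dist (x j) y

/-- The Kantorovich distance between two measures:
`κ(ν₁, ν₂) = sup { ∫ g dν₁ - ∫ g dν₂ : g Lipschitz with constant at most 1 }`. -/
def kantorovich (ν₁ ν₂ : Measure ℝ) : ℝ :=
  ⨆ g : {g : ℝ → ℝ // LipschitzWith 1 g}, (∫ x, g.1 x ∂ν₁ - ∫ x, g.1 x ∂ν₂)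

/-- The empirical measure `E_n(x) = (1/n) ∑_{i<n} δ_{T^i x}`. -/
def empiricalMeasure (T : ℝ → ℝ) (n : ℕ) (x : ℝ) : Measure ℝ :=
  (n : ENNReal)⁻¹ • ∑ i ∈ Finset.range n, Measure.dirac (T^[i] x)

/-- The observed empirical measure `Ẽ_n = (1/n) ∑_{i<n} δ_{y_i}`,
where `y_i = T^i x + ε ξ_i`. -/
def obsEmpirical {n : ℕ} (T : ℝ → ℝ) (ε : ℝ) (p : ℝ × (Fin n → ℝ)) : Measure ℝ :=
  (n : ENNReal)⁻¹ • ∑ i : Fin n, Measure.dirac (T^[(i : ℕ)] p.1 + ε * p.2 i)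

open ProbabilityTheory

instance : Nonempty {g : ℝ → ℝ // LipschitzWith 1 g} := ⟨⟨id, LipschitzWith.id⟩⟩

lemma abs_ciSup_sub_ciSup_le {ι : Sort*} [Nonempty ι] {A B : ι → ℝ}
    (hA : BddAbove (Set.range A)) (hB : BddAbove (Set.range B)) {δ : ℝ}
    (h : ∀ i, |A i - B i| ≤ δ) : |(⨆ i, A i) - ⨆ i, B i| ≤ δ := by
  rw [abs_sub_le_iff, sub_le_iff_le_add, sub_le_iff_le_add]
  constructor
  · exact ciSup_le fun i => by linarith [(abs_sub_le_iff.mp (h i)).1, le_ciSup hB i]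
  · exact ciSup_le fun i => by linarith [(abs_sub_le_iff.mp (h i)).2, le_ciSup hA i]

section LipschitzIntegral

variable {ν : Measure ℝ}

lemma LipschitzWith.integrable_of_integrable_id [IsFiniteMeasure ν] (hν : Integrable id ν)
    {K : NNReal} {g : ℝ → ℝ} (hg : LipschitzWith K g) : Integrable g ν := by
  refine ((integrable_const |g 0|).add (hν.norm.const_mul K)).mono'
    hg.continuous.aestronglyMeasurable (ae_of_all _ fun x => ?_)
  have := hg.dist_le_mul x 0
  simp only [Real.dist_eq, sub_zero, id, Real.norm_eq_abs, Pi.add_apply] at this ⊢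
  linarith [abs_sub_abs_le_abs_sub (g x) (g 0)]

lemma abs_integral_sub_apply_zero_le [IsProbabilityMeasure ν] (hν : Integrable id ν)
    {g : ℝ → ℝ} (hg : LipschitzWith 1 g) : |∫ x, g x ∂ν - g 0| ≤ ∫ x, |x| ∂ν := by
  have hgi := hg.integrable_of_integrable_id hν
  have hsub : ∫ x, g x ∂ν - g 0 = ∫ x, (g x - g 0) ∂ν := by
    rw [integral_sub hgi (integrable_const _), integral_const, probReal_univ, one_smul]
  rw [hsub, ← Real.norm_eq_abs]
  refine norm_integral_le_of_norm_le hν.abs (ae_of_all _ fun x => ?_)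
  simpa [Real.dist_eq] using hg.dist_le_mul x 0

end LipschitzIntegral

section Kantorovich

variable {ν₁ ν₂ μ : Measure ℝ} [IsProbabilityMeasure ν₁] [IsProbabilityMeasure ν₂]
  [IsProbabilityMeasure μ]

lemma integral_sub_integral_le_of_lipschitzWith (h₁ : Integrable id ν₁) (h₂ : Integrable id ν₂)
    {g : ℝ → ℝ} (hg : LipschitzWith 1 g) :
    ∫ x, g x ∂ν₁ - ∫ x, g x ∂ν₂ ≤ ∫ x, |x| ∂ν₁ + ∫ x, |x| ∂ν₂ := by
  linarith [(abs_le.mp (abs_integral_sub_apply_zero_le h₁ hg)).2,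
    (abs_le.mp (abs_integral_sub_apply_zero_le h₂ hg)).1]

lemma bddAbove_range_integral_sub_integral (h₁ : Integrable id ν₁) (h₂ : Integrable id ν₂) :
    BddAbove (Set.range fun g : {g : ℝ → ℝ // LipschitzWith 1 g} =>
      ∫ x, g.1 x ∂ν₁ - ∫ x, g.1 x ∂ν₂) :=
  ⟨_, Set.forall_mem_range.2 fun g => integral_sub_integral_le_of_lipschitzWith h₁ h₂ g.2⟩

/- The first moments make the suprema defining `kantorovich` bounded; an unbounded `⨆` in `ℝ`
would take the junk value `0`. -/
lemma abs_kantorovich_sub_kantorovich_le (h₁ : Integrable id ν₁) (h₂ : Integrable id ν₂)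
    (hμ : Integrable id μ) {δ : ℝ}
    (h : ∀ g : ℝ → ℝ, LipschitzWith 1 g → |∫ x, g x ∂ν₁ - ∫ x, g x ∂ν₂| ≤ δ) :
    |kantorovich ν₁ μ - kantorovich ν₂ μ| ≤ δ :=
  abs_ciSup_sub_ciSup_le (bddAbove_range_integral_sub_integral h₁ hμ)
    (bddAbove_range_integral_sub_integral h₂ hμ) fun g => by
      simpa only [sub_sub_sub_cancel_right] using h g.1 g.2

end Kantorovich

def tupleEmpirical (n : ℕ) (v : Fin n → ℝ) : Measure ℝ :=
  (n : ENNReal)⁻¹ • ∑ i, Measure.dirac (v i)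

section TupleEmpirical

variable {n : ℕ} (v : Fin n → ℝ)

lemma integral_tupleEmpirical (g : ℝ → ℝ) :
    ∫ x, g x ∂tupleEmpirical n v = (n : ℝ)⁻¹ * ∑ i, g (v i) := by
  rw [tupleEmpirical, integral_smul_measure, integral_finsetSum_measure]
  · simp [ENNReal.toReal_inv, smul_eq_mul]
  · exact fun i _ => integrable_dirac (by simp)

variable [NeZero n]

lemma integrable_tupleEmpirical (g : ℝ → ℝ) : Integrable g (tupleEmpirical n v) :=
  (integrable_finsetSum_measure.2 fun i _ => integrable_dirac (by simp)).smul_measure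
    (by simp [NeZero.ne n])

instance : IsProbabilityMeasure (tupleEmpirical n v) :=
  ⟨by simp [tupleEmpirical, ENNReal.inv_mul_cancel (NeZero.ne (n : ENNReal))]⟩

end TupleEmpirical

section KantorovichTupleEmpirical

variable {n : ℕ} [NeZero n] {μ : Measure ℝ} [IsProbabilityMeasure μ]

lemma abs_kantorovich_tupleEmpirical_sub_le (hμ : Integrable id μ) (v w : Fin n → ℝ) :
    |kantorovich (tupleEmpirical n v) μ - kantorovich (tupleEmpirical n w) μ|
      ≤ (n : ℝ)⁻¹ * ∑ i, dist (v i) (w i) := by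
  refine abs_kantorovich_sub_kantorovich_le (integrable_tupleEmpirical v _)
    (integrable_tupleEmpirical w _) hμ fun g hg => ?_
  rw [integral_tupleEmpirical, integral_tupleEmpirical, ← mul_sub, ← Finset.sum_sub_distrib,
    abs_mul, abs_of_nonneg (by positivity)]
  gcongr
  refine (Finset.abs_sum_le_sum_abs _ _).trans (Finset.sum_le_sum fun i _ => ?_)
  simpa [Real.dist_eq] using hg.dist_le_mul (v i) (w i)

lemma sepLip_kantorovich_tupleEmpirical (hμ : Integrable id μ) :
    SepLip (fun v => kantorovich (tupleEmpirical n v) μ) fun _ => (n : ℝ)⁻¹ := by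
  intro v j y
  refine (abs_kantorovich_tupleEmpirical_sub_le hμ v _).trans_eq ?_
  rw [Finset.sum_eq_single j (fun i _ hi => by simp [Function.update_of_ne hi]) (by simp)]
  simp only [Function.update_self]

lemma lipschitzWith_kantorovich_tupleEmpirical (hμ : Integrable id μ) :
    LipschitzWith 1 fun v : Fin n → ℝ => kantorovich (tupleEmpirical n v) μ := by
  refine LipschitzWith.of_dist_le_mul fun v w => ?_
  rw [Real.dist_eq, NNReal.coe_one, one_mul]
  calc _ ≤ (n : ℝ)⁻¹ * ∑ i, dist (v i) (w i) := abs_kantorovich_tupleEmpirical_sub_le hμ v w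
    _ ≤ (n : ℝ)⁻¹ * ∑ _i : Fin n, dist v w := by gcongr with i; exact dist_le_pi_dist v w i
    _ = dist v w := by simp [NeZero.ne n]

lemma kantorovich_tupleEmpirical_add_smul_le (hμ : Integrable id μ) (v ξ : Fin n → ℝ)
    (hξ : ∀ i, |ξ i| ≤ 1) {ε : ℝ} (hε : 0 ≤ ε) :
    kantorovich (tupleEmpirical n (v + ε • ξ)) μ ≤ kantorovich (tupleEmpirical n v) μ + ε := by
  have hdist : (n : ℝ)⁻¹ * ∑ i, dist ((v + ε • ξ) i) (v i) ≤ ε := calc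
    _ ≤ (n : ℝ)⁻¹ * ∑ _i : Fin n, ε := by
      gcongr with i
      rw [Real.dist_eq, Pi.add_apply, add_sub_cancel_left, Pi.smul_apply, smul_eq_mul, abs_mul,
        abs_of_nonneg hε]
      exact mul_le_of_le_one_right hε (hξ i)
    _ = ε := by simp [NeZero.ne n]
  linarith [(abs_le.mp (abs_kantorovich_tupleEmpirical_sub_le hμ (v + ε • ξ) v)).2]

end KantorovichTupleEmpirical

lemma integrable_id_of_ae_mem_isCompact {μ : Measure ℝ} [IsFiniteMeasure μ] {X : Set ℝ}
    (hX : IsCompact X) (hμX : ∀ᵐ x ∂μ, x ∈ X) : Integrable id μ := by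
  obtain ⟨R, hR⟩ := hX.exists_bound_of_continuousOn continuousOn_id
  exact Integrable.of_bound measurable_id.aestronglyMeasurable R (hμX.mono hR)

def trajectory (T : ℝ → ℝ) (n : ℕ) (x : ℝ) : Fin n → ℝ := fun i => T^[(i : ℕ)] x

section Trajectory

variable {T : ℝ → ℝ} {n : ℕ}

lemma measurable_trajectory (hT : Measurable T) : Measurable (trajectory T n) :=
  measurable_pi_lambda _ fun i => hT.iterate i

lemma exists_ae_comp_trajectory_mem_Icc {X : Set ℝ} (hX : IsCompact X) (hTX : Set.MapsTo T X X)
    {μ : Measure ℝ} (hμX : ∀ᵐ x ∂μ, x ∈ X) {K : (Fin n → ℝ) → ℝ} (hK : Continuous K) :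
    ∃ a b, ∀ᵐ x ∂μ, K (trajectory T n x) ∈ Set.Icc a b := by
  have hXn : IsCompact (Set.univ.pi fun _ : Fin n => X) := isCompact_univ_pi fun _ => hX
  obtain ⟨a, ha⟩ := hXn.bddBelow_image hK.continuousOn
  obtain ⟨b, hb⟩ := hXn.bddAbove_image hK.continuousOn
  refine ⟨a, b, hμX.mono fun x hx => ?_⟩
  have hmem : K (trajectory T n x) ∈ K '' Set.univ.pi fun _ => X :=
    Set.mem_image_of_mem K fun i _ => hTX.iterate (i : ℕ) hx
  exact ⟨ha hmem, hb hmem⟩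

end Trajectory

def ExpConcentration (T : ℝ → ℝ) (μ : Measure ℝ) (C : ℝ) : Prop :=
  ∀ (n : ℕ), 1 ≤ n → ∀ (K : (Fin n → ℝ) → ℝ) (L : Fin n → ℝ), SepLip K L →
    ∫ x, exp (K (trajectory T n x) - ∫ z, K (trajectory T n z) ∂μ) ∂μ ≤ exp (C * ∑ j, L j ^ 2)

lemma SepLip.const_mul {n : ℕ} {K : (Fin n → ℝ) → ℝ} {L : Fin n → ℝ} (h : SepLip K L) (a : ℝ) :
    SepLip (fun v => a * K v) fun j => |a| * L j := by
  intro x j y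
  rw [← mul_sub, abs_mul, mul_assoc]
  exact mul_le_mul_of_nonneg_left (h x j y) (abs_nonneg a)

lemma ExpConcentration.hasSubgaussianMGF {T : ℝ → ℝ} {μ : Measure ℝ} [IsFiniteMeasure μ] {C : ℝ}
    (h : ExpConcentration T μ C) {n : ℕ} (hn : 1 ≤ n) {K : (Fin n → ℝ) → ℝ} {L : Fin n → ℝ}
    (hK : SepLip K L) (hKm : AEMeasurable (fun x => K (trajectory T n x)) μ) {a b : ℝ}
    (hKab : ∀ᵐ x ∂μ, K (trajectory T n x) ∈ Set.Icc a b) :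
    HasSubgaussianMGF (fun x => K (trajectory T n x) - ∫ z, K (trajectory T n z) ∂μ)
      (2 * C * ∑ j, L j ^ 2).toNNReal μ where
  integrable_exp_mul _ := integrable_exp_mul_of_mem_Icc (hKm.sub_const _)
    (hKab.mono fun _ hx => ⟨sub_le_sub_right hx.1 _, sub_le_sub_right hx.2 _⟩)
  mgf_le t := by
    have ht := h n hn _ _ (hK.const_mul t)
    simp only [integral_const_mul, ← mul_sub, mul_pow, sq_abs, ← Finset.mul_sum] at ht
    refine ht.trans (exp_le_exp.2 ?_)
    rw [Real.coe_toNNReal']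
    nlinarith [mul_le_mul_of_nonneg_right (le_max_left (2 * C * ∑ j, L j ^ 2) 0) (sq_nonneg t)]

lemma ExpConcentration.measureReal_kantorovich_ge_le {T : ℝ → ℝ} {μ : Measure ℝ}
    [IsProbabilityMeasure μ] {C : ℝ} (hconc : ExpConcentration T μ C) (hC : 0 ≤ C)
    (hT : Measurable T) {X : Set ℝ} (hX : IsCompact X) (hTX : Set.MapsTo T X X)
    (hμX : ∀ᵐ x ∂μ, x ∈ X) {n : ℕ} [NeZero n] {u : ℝ} (hu : 0 ≤ u) :
    μ.real {x | u ≤ kantorovich (tupleEmpirical n (trajectory T n x)) μ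
        - ∫ z, kantorovich (tupleEmpirical n (trajectory T n z)) μ ∂μ}
      ≤ exp (-(u ^ 2 * n) / (4 * C)) := by
  have hμ := integrable_id_of_ae_mem_isCompact hX hμX
  have hΦ := (lipschitzWith_kantorovich_tupleEmpirical (n := n) hμ).continuous
  obtain ⟨a, b, hab⟩ := exists_ae_comp_trajectory_mem_Icc hX hTX hμX hΦ
  have hsg := hconc.hasSubgaussianMGF NeZero.one_le (sepLip_kantorovich_tupleEmpirical hμ)
    (hΦ.measurable.comp (measurable_trajectory hT)).aemeasurable hab
  refine (hsg.measure_ge_le hu).trans_eq ?_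
  rw [Real.coe_toNNReal _ (by positivity)]
  simp only [inv_pow, Finset.sum_const, Finset.card_univ, Fintype.card_fin, nsmul_eq_mul,
    exp_eq_exp]
  field_simp
  ring

lemma ae_forall_snd_apply_of_ae {α β : Type*} [MeasurableSpace α] [MeasurableSpace β]
    {μ : Measure α} [SFinite μ] {P : Measure β} [SigmaFinite P] {n : ℕ} {q : β → Prop}
    (hq : ∀ᵐ ξ ∂P, q ξ) : ∀ᵐ p ∂μ.prod (Measure.pi fun _ : Fin n => P), ∀ i, q (p.2 i) :=
  Measure.quasiMeasurePreserving_snd.ae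
    (Filter.eventually_all.2 fun _ => Measure.tendsto_eval_ae_ae.eventually hq)

lemma empiricalMeasure_eq_tupleEmpirical (T : ℝ → ℝ) (n : ℕ) (x : ℝ) :
    empiricalMeasure T n x = tupleEmpirical n (trajectory T n x) := by
  rw [empiricalMeasure, ← Fin.sum_univ_eq_sum_range (fun i => Measure.dirac (T^[i] x))]
  rfl

lemma obsEmpirical_eq_tupleEmpirical {n : ℕ} (T : ℝ → ℝ) (ε : ℝ) (p : ℝ × (Fin n → ℝ)) :
    obsEmpirical T ε p = tupleEmpirical n (trajectory T n p.1 + ε • p.2) :=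
  rfl

lemma sq_rpow_quarter {x : ℝ} (hx : 0 ≤ x) : (x ^ ((1 : ℝ) / 4)) ^ 2 = √x := by
  rw [sqrt_eq_rpow, ← rpow_natCast, ← rpow_mul hx]
  norm_num

theorem observed_empirical_measure_speed_exponential_general
    (X : Set ℝ) (hX : IsCompact X) (T : ℝ → ℝ) (hT : Measurable T)
    (hTX : Set.MapsTo T X X)
    (μ : Measure ℝ) [IsProbabilityMeasure μ] (hμX : μ X = 1)
    (B : ℝ)
    (hBbound : ∀ n : ℕ, 1 ≤ n →
      ∫ x, kantorovich (empiricalMeasure T n x) μ ∂μ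
        ≤ B * (n : ℝ) ^ (-(1 / 4 : ℝ)))
    (C : ℝ) (hC : 0 < C)
    (hconc : ∀ (n : ℕ), 1 ≤ n → ∀ (K : (Fin n → ℝ) → ℝ) (L : Fin n → ℝ), SepLip K L →
      ∫ x, Real.exp (K (fun i => T^[(i : ℕ)] x)
          - ∫ z, K (fun i => T^[(i : ℕ)] z) ∂μ) ∂μ
        ≤ Real.exp (C * ∑ j, L j ^ 2))
    (P : Measure ℝ) [IsProbabilityMeasure P] (hP : ∀ᵐ ξ ∂P, |ξ| ≤ 1) :
    ∃ D : ℝ, 0 < D ∧ ∀ ε : ℝ, 0 < ε → ∀ (n : ℕ), 1 ≤ n → ∀ t : ℝ, 0 < t →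
      ((μ.prod (Measure.pi fun _ : Fin n => P))
          {p | (t + B) / (n : ℝ) ^ ((1 : ℝ) / 4) + ε
            < kantorovich (obsEmpirical T ε p) μ}).toReal
        ≤ Real.exp (-(t ^ 2 * Real.sqrt n) / (4 * D * (1 + ε ^ 2))) := by
  have hμX' : ∀ᵐ x ∂μ, x ∈ X :=
    (ae_mem_iff_measure_eq hX.isClosed.measurableSet.nullMeasurableSet).2 (by simp [hμX])
  have hμ := integrable_id_of_ae_mem_isCompact hX hμX'
  refine ⟨C, hC, fun ε hε n hn t ht => ?_⟩
  have : NeZero n := ⟨by omega⟩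
  set n4 := (n : ℝ) ^ ((1 : ℝ) / 4)
  set Φ := fun x => kantorovich (tupleEmpirical n (trajectory T n x)) μ
  have hmean : ∫ x, Φ x ∂μ ≤ B / n4 := by
    have hB := hBbound n hn
    rw [rpow_neg n.cast_nonneg, ← div_eq_mul_inv] at hB
    simpa only [empiricalMeasure_eq_tupleEmpirical] using hB
  have hevent : {p | (t + B) / n4 + ε < kantorovich (obsEmpirical T ε p) μ}
      ≤ᵐ[μ.prod (Measure.pi fun _ : Fin n => P)]
        {x | t / n4 ≤ Φ x - ∫ z, Φ z ∂μ} ×ˢ Set.univ := by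
    filter_upwards [ae_forall_snd_apply_of_ae hP] with p hp hlt
    have hlt' : (t + B) / n4 + ε < kantorovich (obsEmpirical T ε p) μ := hlt
    rw [obsEmpirical_eq_tupleEmpirical, add_div] at hlt'
    have hnoise := kantorovich_tupleEmpirical_add_smul_le hμ (trajectory T n p.1) p.2 hp hε.le
    exact ⟨show t / n4 ≤ Φ p.1 - ∫ z, Φ z ∂μ by linarith, trivial⟩
  have htail := ExpConcentration.measureReal_kantorovich_ge_le hconc hC.le hT hX hTX hμX'
    (n := n) (u := t / n4) (by positivity)
  calc _ ≤ ((μ.prod (Measure.pi fun _ : Fin n => P))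
          ({x | t / n4 ≤ Φ x - ∫ z, Φ z ∂μ} ×ˢ Set.univ)).toReal :=
        ENNReal.toReal_mono (measure_ne_top _ _) (measure_mono_ae hevent)
    _ ≤ exp (-((t / n4) ^ 2 * n) / (4 * C)) := by
        rw [Measure.prod_prod, measure_univ, mul_one]
        exact htail
    _ = exp (-(t ^ 2 * √n) / (4 * C)) := by
        rw [div_pow, sq_rpow_quarter n.cast_nonneg, div_mul_eq_mul_div, mul_div_assoc, div_sqrt]
    _ ≤ _ := by
        rw [exp_le_exp, neg_div, neg_div, neg_le_neg_iff]
        exact div_le_div_of_nonneg_left (by positivity) (by positivity)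
          (le_mul_of_one_le_right (by positivity) (by nlinarith))

/-- Speed of convergence of the observed empirical measure, exponential case:
`μ_n ⊗ P^n(κ(Ẽ_n, μ) > (t+B)/n^{1/4} + ε) ≤ exp(-t²√n / (4D(1+ε²)))`. -/
theorem observed_empirical_measure_speed_exponential
    (X : Set ℝ) (hX : IsCompact X) (T : ℝ → ℝ) (hT : Measurable T)
    (hTX : Set.MapsTo T X X)
    (μ : Measure ℝ) [IsProbabilityMeasure μ] (hμX : μ X = 1) (hinv : μ.map T = μ)
    (c : ℝ) (hc : 0 < c)
    (hcov : ∀ (f : ℝ → ℝ), Measurable f → ∀ Lf Mf : ℝ,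
      (∀ x ∈ X, ∀ y ∈ X, |f x - f y| ≤ Lf * dist x y) →
      (∀ x ∈ X, |f x| ≤ Mf) →
      Summable (fun k : ℕ =>
        |∫ x, f x * f (T^[k + 1] x) ∂μ - (∫ x, f x ∂μ) ^ 2|) ∧
      ∑' k : ℕ, |∫ x, f x * f (T^[k + 1] x) ∂μ - (∫ x, f x ∂μ) ^ 2|
        ≤ c * (Lf + Mf) ^ 2)
    (B : ℝ) (hB : 0 < B)
    (hBbound : ∀ n : ℕ, 1 ≤ n →
      ∫ x, kantorovich (empiricalMeasure T n x) μ ∂μ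
        ≤ B * (n : ℝ) ^ (-(1 / 4 : ℝ)))
    (C : ℝ) (hC : 0 < C)
    (hconc : ∀ (n : ℕ), 1 ≤ n → ∀ (K : (Fin n → ℝ) → ℝ) (L : Fin n → ℝ), SepLip K L →
      ∫ x, Real.exp (K (fun i => T^[(i : ℕ)] x)
          - ∫ z, K (fun i => T^[(i : ℕ)] z) ∂μ) ∂μ
        ≤ Real.exp (C * ∑ j, L j ^ 2))
    (P : Measure ℝ) [IsProbabilityMeasure P] (hP : ∀ᵐ ξ ∂P, |ξ| ≤ 1) :
    ∃ D : ℝ, 0 < D ∧ ∀ ε : ℝ, 0 < ε → ∀ (n : ℕ), 1 ≤ n → ∀ t : ℝ, 0 < t →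
      ((μ.prod (Measure.pi fun _ : Fin n => P))
          {p | (t + B) / (n : ℝ) ^ ((1 : ℝ) / 4) + ε
            < kantorovich (obsEmpirical T ε p) μ}).toReal
        ≤ Real.exp (-(t ^ 2 * Real.sqrt n) / (4 * D * (1 + ε ^ 2))) :=
  observed_empirical_measure_speed_exponential_general X hX T hT hTX μ hμX B hBbound C hC hconc P hP
end
end

section
/- Let X be a compact subset of ℝ, T : X → X Borel measurable, and μ a T-invariant Borel probability measure. Assume: (i) there exists c > 0 such that for every Lipschitz f : X → ℝ, Σ_{k=1}^{∞} |Cov_f(k)| ≤ c ‖f‖_Lip² with Cov_f(k) = ∫ f·(f∘T^k) dμ − (∫ f dμ)² and ‖f‖_Lip = Lip(f) + ‖f‖_∞, and let B > 0 be such that ∫ κ(E_n(x), μ) dμ(x) ≤ B n^{−1/4} for all n, where E_n(x) = (1/n) Σ_{i<n} δ_{T^i x}; (ii) (X,T,μ) satisfies the polynomial concentration inequality with moment q ≥ 2. Then there exists D_q > 0 such that for every ε > 0, every n ≥ 1, and every t > 0, the observed empirical measure Ẽ_n = (1/n) Σ_{i=0}^{n−1} δ_{y_i} satisfies μ_n ⊗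 P^n(κ(Ẽ_n, μ) > (t + B)/n^{1/4} + ε) ≤ (D_q (1 + ε)^q / t^q) · n^{−q/4}. -/
/-!
Moving each point of an `n`-point configuration by at most `ε` moves its empirical measure by at
most `ε` in Kantorovich distance, so outside a null set of noises the event forces
`κ(E_n(x), μ)` to exceed its mean, which is at most `B n^{-1/4}`, by more than `t n^{-1/4}`.
The map `v ↦ κ((1/n) ∑ δ_{v_i}, μ)` is separately Lipschitz with constants `1/n`, so the
concentration inequality bounds its `q`-th central moment along orbits by `C_q n^{-q/2}`, and
Markov's inequality turns this into the tail bound `C_q t^{-q} n^{-q/4}`.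
-/

open MeasureTheory Real

noncomputable section

def empiricalOf {n : ℕ} (v : Fin n → ℝ) : Measure ℝ :=
  (n : ENNReal)⁻¹ • ∑ i : Fin n, Measure.dirac (v i)

lemma empiricalOf_iterate (T : ℝ → ℝ) (n : ℕ) (x : ℝ) :
    empiricalOf (fun i : Fin n => T^[(i : ℕ)] x) = empiricalMeasure T n x := by
  rw [empiricalOf, empiricalMeasure, Fin.sum_univ_eq_sum_range (fun i => Measure.dirac (T^[i] x))]

lemma obsEmpirical_eq_empiricalOf {n : ℕ} (T : ℝ → ℝ) (ε : ℝ) (p : ℝ × (Fin n → ℝ)) :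
    obsEmpirical T ε p = empiricalOf fun i => T^[(i : ℕ)] p.1 + ε * p.2 i :=
  rfl

lemma integral_empiricalOf {n : ℕ} (v : Fin n → ℝ) (g : ℝ → ℝ) :
    ∫ x, g x ∂(empiricalOf v) = (n : ℝ)⁻¹ * ∑ i, g (v i) := by
  rw [empiricalOf, integral_smul_measure, integral_finsetSum_measure
    fun i _ => (integrable_const (g (v i))).congr (ae_eq_dirac g).symm]
  simp [smul_eq_mul]

lemma inv_mul_sum_le {n : ℕ} (hn : n ≠ 0) {a : Fin n → ℝ} {C : ℝ} (ha : ∀ i, a i ≤ C) :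
    (n : ℝ)⁻¹ * ∑ i, a i ≤ C := by
  have hsum : ∑ i, a i ≤ n * C := by
    simpa using Finset.sum_le_sum fun i (_ : i ∈ Finset.univ) => ha i
  rw [inv_mul_le_iff₀ (by positivity)]
  exact hsum

lemma LipschitzWith.integrable_of_ae_abs_le {μ : Measure ℝ} [IsFiniteMeasure μ] {M : ℝ}
    {g : ℝ → ℝ} {K : NNReal} (hg : LipschitzWith K g)
    (hμ : ∀ᵐ z ∂μ, |z| ≤ M) : Integrable g μ := by
  refine Integrable.of_bound hg.continuous.aestronglyMeasurable (|g 0| + K * M) ?_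
  filter_upwards [hμ] with z hz
  have hgz : |g z - g 0| ≤ K * |z| := by simpa [Real.dist_eq] using hg.dist_le_mul z 0
  have hKz : (K : ℝ) * |z| ≤ K * M := by gcongr
  rw [Real.norm_eq_abs]
  linarith [abs_sub_abs_le_abs_sub (g z) (g 0)]

instance inst_s14 : Nonempty {g : ℝ → ℝ // LipschitzWith 1 g} :=
  ⟨⟨0, (LipschitzWith.const 0).weaken zero_le_one⟩⟩

section Kantorovich

variable {μ : Measure ℝ} [IsProbabilityMeasure μ] {M : ℝ} {n : ℕ}

lemma LipschitzWith.sub_integral_le {g : ℝ → ℝ} (hg : LipschitzWith 1 g)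
    (hμ : ∀ᵐ z ∂μ, |z| ≤ M) (y : ℝ) : g y - ∫ z, g z ∂μ ≤ |y| + M := by
  have hint := hg.integrable_of_ae_abs_le hμ
  calc g y - ∫ z, g z ∂μ = ∫ z, (g y - g z) ∂μ := by
        rw [integral_sub (integrable_const _) hint, integral_const, probReal_univ, one_smul]
    _ ≤ ∫ _z, (|y| + M) ∂μ := by
        refine integral_mono_ae ((integrable_const _).sub hint) (integrable_const _) ?_
        filter_upwards [hμ] with z hz
        have hgyz : |g y - g z| ≤ |y - z| := by simpa [Real.dist_eq] using hg.dist_le_mul y z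
        linarith [le_abs_self (g y - g z), abs_sub y z]
    _ = |y| + M := by simp

lemma integral_empiricalOf_sub_integral_le (hμ : ∀ᵐ z ∂μ, |z| ≤ M) (hn : n ≠ 0)
    (v : Fin n → ℝ) {g : ℝ → ℝ} (hg : LipschitzWith 1 g) :
    ∫ x, g x ∂(empiricalOf v) - ∫ x, g x ∂μ ≤ (n : ℝ)⁻¹ * ∑ i, (|v i| + M) := by
  have hmean : (n : ℝ)⁻¹ * ∑ i, (g (v i) - ∫ x, g x ∂μ) ≤ (n : ℝ)⁻¹ * ∑ i, (|v i| + M) :=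
    mul_le_mul_of_nonneg_left (Finset.sum_le_sum fun i _ => hg.sub_integral_le hμ (v i))
      (by positivity)
  rw [Finset.sum_sub_distrib, Finset.sum_const, Finset.card_univ, Fintype.card_fin, nsmul_eq_mul,
    mul_sub, ← mul_assoc, inv_mul_cancel₀ (by exact_mod_cast hn), one_mul] at hmean
  rwa [integral_empiricalOf]

lemma bddAbove_kantorovich_empiricalOf (hμ : ∀ᵐ z ∂μ, |z| ≤ M) (hn : n ≠ 0) (v : Fin n → ℝ) :
    BddAbove (Set.range fun g : {g : ℝ → ℝ // LipschitzWith 1 g} =>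
      ∫ x, g.1 x ∂(empiricalOf v) - ∫ x, g.1 x ∂μ) :=
  ⟨_, Set.forall_mem_range.2 fun g => integral_empiricalOf_sub_integral_le hμ hn v g.2⟩

lemma kantorovich_empiricalOf_nonneg (hμ : ∀ᵐ z ∂μ, |z| ≤ M) (hn : n ≠ 0) (v : Fin n → ℝ) :
    0 ≤ kantorovich (empiricalOf v) μ := by
  refine le_trans ?_ (le_ciSup (bddAbove_kantorovich_empiricalOf hμ hn v)
    ⟨0, (LipschitzWith.const 0).weaken zero_le_one⟩)
  simp

lemma kantorovich_empiricalOf_le (hμ : ∀ᵐ z ∂μ, |z| ≤ M) (hn : n ≠ 0) {v : Fin n → ℝ}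
    (hv : ∀ i, |v i| ≤ M) : kantorovich (empiricalOf v) μ ≤ 2 * M :=
  ciSup_le fun g => (integral_empiricalOf_sub_integral_le hμ hn v g.2).trans <|
    inv_mul_sum_le hn fun i => by linarith [hv i]

lemma kantorovich_empiricalOf_le_add (hμ : ∀ᵐ z ∂μ, |z| ≤ M) (hn : n ≠ 0) (v w : Fin n → ℝ) :
    kantorovich (empiricalOf v) μ
      ≤ kantorovich (empiricalOf w) μ + (n : ℝ)⁻¹ * ∑ i, |v i - w i| := by
  refine ciSup_le fun ⟨g, hg⟩ => ?_
  have hsum : ∑ i, g (v i) ≤ ∑ i, g (w i) + ∑ i, |v i - w i| := by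
    rw [← Finset.sum_add_distrib]
    refine Finset.sum_le_sum fun i _ => ?_
    have hgvw : |g (v i) - g (w i)| ≤ |v i - w i| := by
      simpa [Real.dist_eq] using hg.dist_le_mul (v i) (w i)
    linarith [le_abs_self (g (v i) - g (w i))]
  have hw : _ ≤ kantorovich (empiricalOf w) μ :=
    le_ciSup (bddAbove_kantorovich_empiricalOf hμ hn w) ⟨g, hg⟩
  rw [integral_empiricalOf] at hw ⊢
  nlinarith [mul_le_mul_of_nonneg_left hsum (by positivity : (0 : ℝ) ≤ (n : ℝ)⁻¹)]

lemma abs_kantorovich_empiricalOf_sub_le (hμ : ∀ᵐ z ∂μ, |z| ≤ M) (hn : n ≠ 0)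
    (v w : Fin n → ℝ) :
    |kantorovich (empiricalOf v) μ - kantorovich (empiricalOf w) μ|
      ≤ (n : ℝ)⁻¹ * ∑ i, |v i - w i| := by
  have hvw := kantorovich_empiricalOf_le_add hμ hn v w
  have hwv := kantorovich_empiricalOf_le_add hμ hn w v
  simp only [abs_sub_comm (w _)] at hwv
  rw [abs_sub_le_iff]
  constructor <;> linarith

lemma sepLip_kantorovich_empiricalOf (hμ : ∀ᵐ z ∂μ, |z| ≤ M) (hn : n ≠ 0) :
    SepLip (fun v : Fin n → ℝ => kantorovich (empiricalOf v) μ) fun _ => (n : ℝ)⁻¹ := by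
  intro v j y
  refine (abs_kantorovich_empiricalOf_sub_le hμ hn v (Function.update v j y)).trans_eq ?_
  rw [Finset.sum_eq_single j (fun i _ hij => by simp [Function.update_of_ne hij]) (by simp),
    Function.update_self, Real.dist_eq]

lemma lipschitzWith_kantorovich_empiricalOf (hμ : ∀ᵐ z ∂μ, |z| ≤ M) (hn : n ≠ 0) :
    LipschitzWith 1 fun v : Fin n → ℝ => kantorovich (empiricalOf v) μ := by
  refine LipschitzWith.of_dist_le_mul fun v w => ?_
  rw [NNReal.coe_one, one_mul, Real.dist_eq]
  exact (abs_kantorovich_empiricalOf_sub_le hμ hn v w).trans <| inv_mul_sum_le hn fun i => by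
    rw [← Real.dist_eq]; exact dist_le_pi_dist v w i

lemma kantorovich_obsEmpirical_le (hμ : ∀ᵐ z ∂μ, |z| ≤ M) (hn : n ≠ 0) (T : ℝ → ℝ)
    {ε : ℝ} (hε : 0 ≤ ε) {p : ℝ × (Fin n → ℝ)} (hp : ∀ i, |p.2 i| ≤ 1) :
    kantorovich (obsEmpirical T ε p) μ
      ≤ kantorovich (empiricalOf fun i : Fin n => T^[(i : ℕ)] p.1) μ + ε := by
  rw [obsEmpirical_eq_empiricalOf]
  refine (kantorovich_empiricalOf_le_add hμ hn _ _).trans (add_le_add le_rfl ?_)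
  refine inv_mul_sum_le hn fun i => ?_
  rw [add_sub_cancel_left, abs_mul, abs_of_nonneg hε]
  exact mul_le_of_le_one_right hε (hp i)

end Kantorovich

section Probability

variable {α β : Type*} [MeasurableSpace α] [MeasurableSpace β] {μ : Measure α}

lemma measureReal_lt_abs_le_integral_rpow_div [IsFiniteMeasure μ] {F : α → ℝ} {a q : ℝ}
    (ha : 0 < a) (hq : 0 ≤ q) (hF : Integrable (fun x => |F x| ^ q) μ) :
    μ.real {x | a < |F x|} ≤ (∫ x, |F x| ^ q ∂μ) / a ^ q := by
  rw [le_div_iff₀ (rpow_pos_of_pos ha q), mul_comm]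
  calc a ^ q * μ.real {x | a < |F x|} ≤ a ^ q * μ.real {x | a ^ q ≤ |F x| ^ q} := by
        refine mul_le_mul_of_nonneg_left (measureReal_mono fun x hx => ?_) (by positivity)
        exact rpow_le_rpow ha.le hx.le hq
    _ ≤ ∫ x, |F x| ^ q ∂μ :=
        mul_meas_ge_le_integral_of_nonneg (ae_of_all _ fun x => by positivity) hF _

lemma integrable_abs_rpow_of_ae_abs_le [IsFiniteMeasure μ] {F : α → ℝ}
    (hF : AEStronglyMeasurable F μ) {C : ℝ} (hC : ∀ᵐ x ∂μ, |F x| ≤ C) {q : ℝ} (hq : 0 ≤ q) :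
    Integrable (fun x => |F x| ^ q) μ := by
  simpa [ENNReal.toReal_ofReal hq] using
    (MemLp.of_bound (p := ENNReal.ofReal q) hF C hC).integrable_norm_rpow'

lemma prod_apply_le_of_ae_snd {ν : Measure β} [IsProbabilityMeasure ν] {G : β → Prop}
    (hG : ∀ᵐ ξ ∂ν, G ξ) {S : Set (α × β)} {A : Set α} (hS : ∀ p ∈ S, G p.2 → p.1 ∈ A) :
    μ.prod ν S ≤ μ A :=
  calc μ.prod ν S ≤ μ.prod ν (Prod.fst ⁻¹' A) := by
        refine measure_mono_ae ?_
        filter_upwards [Measure.quasiMeasurePreserving_snd.ae hG] with p hp hpS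
        exact hS p hpS hp
    _ ≤ (μ.prod ν).map Prod.fst A := Measure.le_map_apply measurable_fst.aemeasurable A
    _ = μ A := by rw [Measure.map_fst_prod, measure_univ, one_smul]

end Probability

lemma measureReal_lt_abs_kantorovich_sub_integral_le {X : Set ℝ} {T : ℝ → ℝ}
    (hT : Measurable T) (hTX : Set.MapsTo T X X) {μ : Measure ℝ} [IsProbabilityMeasure μ]
    {M : ℝ} (hM : ∀ x ∈ X, |x| ≤ M) (hXae : ∀ᵐ z ∂μ, z ∈ X) {n : ℕ} (hn : n ≠ 0)
    {q Cq : ℝ} (hq : 0 ≤ q)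
    (hconc : ∀ (K : (Fin n → ℝ) → ℝ) (L : Fin n → ℝ), SepLip K L →
      ∫ x, |K (fun i => T^[(i : ℕ)] x) - ∫ z, K (fun i => T^[(i : ℕ)] z) ∂μ| ^ q ∂μ
        ≤ Cq * (∑ j, L j ^ 2) ^ (q / 2))
    {s : ℝ} (hs : 0 < s) :
    μ.real {x | s < |kantorovich (empiricalOf fun i : Fin n => T^[(i : ℕ)] x) μ
        - ∫ z, kantorovich (empiricalOf fun i : Fin n => T^[(i : ℕ)] z) μ ∂μ|}
      ≤ Cq * (n : ℝ) ^ (-(q / 2)) / s ^ q := by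
  have hμM : ∀ᵐ z ∂μ, |z| ≤ M := hXae.mono hM
  set K := fun v : Fin n → ℝ => kantorovich (empiricalOf v) μ
  set m := ∫ z, K (fun i => T^[(i : ℕ)] z) ∂μ
  have hmeas : Measurable fun x => K (fun i => T^[(i : ℕ)] x) - m :=
    ((lipschitzWith_kantorovich_empiricalOf hμM hn).continuous.measurable.comp
      (measurable_pi_lambda _ fun i => hT.iterate i)).sub_const m
  have hbound : ∀ᵐ x ∂μ, |K (fun i => T^[(i : ℕ)] x) - m| ≤ 2 * M + |m| := by
    filter_upwards [hXae] with x hx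
    have hKx := kantorovich_empiricalOf_le hμM hn fun i : Fin n => hM _ (hTX.iterate i hx)
    have hKx0 := kantorovich_empiricalOf_nonneg hμM hn fun i : Fin n => T^[(i : ℕ)] x
    rw [abs_le]
    constructor <;> linarith [neg_abs_le m, le_abs_self m]
  have hsum : ∑ _j : Fin n, ((n : ℝ)⁻¹) ^ 2 = (n : ℝ)⁻¹ := by
    rw [Finset.sum_const, Finset.card_univ, Fintype.card_fin, nsmul_eq_mul]
    field_simp
  calc μ.real {x | s < |K (fun i => T^[(i : ℕ)] x) - m|}
      ≤ (∫ x, |K (fun i => T^[(i : ℕ)] x) - m| ^ q ∂μ) / s ^ q :=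
        measureReal_lt_abs_le_integral_rpow_div hs hq
          (integrable_abs_rpow_of_ae_abs_le hmeas.aestronglyMeasurable hbound hq)
    _ ≤ Cq * (∑ _j : Fin n, ((n : ℝ)⁻¹) ^ 2) ^ (q / 2) / s ^ q := by
        gcongr
        exact hconc K _ (sepLip_kantorovich_empiricalOf hμM hn)
    _ = Cq * (n : ℝ) ^ (-(q / 2)) / s ^ q := by
        rw [hsum, inv_rpow (Nat.cast_nonneg n), ← rpow_neg (Nat.cast_nonneg n)]

theorem observed_empirical_measure_speed_polynomial_general
    (X : Set ℝ) (hX : IsCompact X) (T : ℝ → ℝ) (hT : Measurable T)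
    (hTX : Set.MapsTo T X X)
    (μ : Measure ℝ) [IsProbabilityMeasure μ] (hμX : μ X = 1)
    (B : ℝ)
    (hBbound : ∀ n : ℕ, 1 ≤ n →
      ∫ x, kantorovich (empiricalMeasure T n x) μ ∂μ
        ≤ B * (n : ℝ) ^ (-(1 / 4 : ℝ)))
    (q : ℝ) (hq : 2 ≤ q) (Cq : ℝ) (hCq : 0 < Cq)
    (hconc : ∀ (n : ℕ), 1 ≤ n → ∀ (K : (Fin n → ℝ) → ℝ) (L : Fin n → ℝ), SepLip K L →
      ∫ x, |K (fun i => T^[(i : ℕ)] x)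
          - ∫ z, K (fun i => T^[(i : ℕ)] z) ∂μ| ^ q ∂μ
        ≤ Cq * (∑ j, L j ^ 2) ^ (q / 2))
    (P : Measure ℝ) [IsProbabilityMeasure P] (hP : ∀ᵐ ξ ∂P, |ξ| ≤ 1) :
    ∃ Dq : ℝ, 0 < Dq ∧ ∀ ε : ℝ, 0 < ε → ∀ (n : ℕ), 1 ≤ n → ∀ t : ℝ, 0 < t →
      ((μ.prod (Measure.pi fun _ : Fin n => P))
          {p | (t + B) / (n : ℝ) ^ ((1 : ℝ) / 4) + ε
            < kantorovich (obsEmpirical T ε p) μ}).toReal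
        ≤ (Dq * (1 + ε) ^ q / t ^ q) * (n : ℝ) ^ (-(q / 4)) := by
  obtain ⟨M, hM⟩ := hX.isBounded.exists_norm_le
  have hXae : ∀ᵐ z ∂μ, z ∈ X :=
    (ae_mem_iff_measure_eq hX.isClosed.measurableSet.nullMeasurableSet).2 (by simpa using hμX)
  refine ⟨Cq, hCq, fun ε hε n hn t ht => ?_⟩
  have hnpos : (0 : ℝ) < n := by positivity
  set K := fun v : Fin n → ℝ => kantorovich (empiricalOf v) μ
  set m := ∫ z, K (fun i => T^[(i : ℕ)] z) ∂μ
  have hm : m ≤ B / (n : ℝ) ^ ((1 : ℝ) / 4) := by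
    simpa only [K, m, empiricalOf_iterate, rpow_neg hnpos.le, one_div, div_eq_mul_inv]
      using hBbound n hn
  have hevent : (μ.prod (Measure.pi fun _ : Fin n => P))
      {p | (t + B) / (n : ℝ) ^ ((1 : ℝ) / 4) + ε < kantorovich (obsEmpirical T ε p) μ}
      ≤ μ {x | t / (n : ℝ) ^ ((1 : ℝ) / 4) < |K (fun i => T^[(i : ℕ)] x) - m|} := by
    refine prod_apply_le_of_ae_snd (Measure.ae_pi_le_pi (Filter.eventually_pi fun _ => hP))
      fun p hp hξ => ?_
    have hobs : _ ≤ K _ + ε :=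
      kantorovich_obsEmpirical_le (hXae.mono hM) (by omega) T hε.le hξ
    rw [Set.mem_ofPred_eq, add_div] at hp
    have hdev : t / (n : ℝ) ^ ((1 : ℝ) / 4) < K (fun i => T^[(i : ℕ)] p.1) - m := by linarith
    exact hdev.trans_le (le_abs_self _)
  calc _ ≤ μ.real {x | t / (n : ℝ) ^ ((1 : ℝ) / 4) < |K (fun i => T^[(i : ℕ)] x) - m|} :=
        ENNReal.toReal_mono (measure_ne_top _ _) hevent
    _ ≤ Cq * (n : ℝ) ^ (-(q / 2)) / (t / (n : ℝ) ^ ((1 : ℝ) / 4)) ^ q :=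
        measureReal_lt_abs_kantorovich_sub_integral_le hT hTX hM hXae (by omega) (by linarith)
          (hconc n hn) (by positivity)
    _ = Cq / t ^ q * (n : ℝ) ^ (-(q / 4)) := by
        rw [div_rpow ht.le (by positivity), ← rpow_mul hnpos.le, div_div_eq_mul_div, mul_assoc,
          ← rpow_add hnpos]
        ring_nf
    _ ≤ Cq * (1 + ε) ^ q / t ^ q * (n : ℝ) ^ (-(q / 4)) := by
        gcongr
        exact le_mul_of_one_le_right hCq.le (one_le_rpow (by linarith) (by linarith))

/-- Speed of convergence of the observed empirical measure, polynomial case: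
`μ_n ⊗ P^n(κ(Ẽ_n, μ) > (t+B)/n^{1/4} + ε) ≤ (D_q (1+ε)^q / t^q) n^{-q/4}`. -/
theorem observed_empirical_measure_speed_polynomial
    (X : Set ℝ) (hX : IsCompact X) (T : ℝ → ℝ) (hT : Measurable T)
    (hTX : Set.MapsTo T X X)
    (μ : Measure ℝ) [IsProbabilityMeasure μ] (hμX : μ X = 1) (hinv : μ.map T = μ)
    (c : ℝ) (hc : 0 < c)
    (hcov : ∀ (f : ℝ → ℝ), Measurable f → ∀ Lf Mf : ℝ,
      (∀ x ∈ X, ∀ y ∈ X, |f x - f y| ≤ Lf * dist x y) →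
      (∀ x ∈ X, |f x| ≤ Mf) →
      Summable (fun k : ℕ =>
        |∫ x, f x * f (T^[k + 1] x) ∂μ - (∫ x, f x ∂μ) ^ 2|) ∧
      ∑' k : ℕ, |∫ x, f x * f (T^[k + 1] x) ∂μ - (∫ x, f x ∂μ) ^ 2|
        ≤ c * (Lf + Mf) ^ 2)
    (B : ℝ) (hB : 0 < B)
    (hBbound : ∀ n : ℕ, 1 ≤ n →
      ∫ x, kantorovich (empiricalMeasure T n x) μ ∂μ
        ≤ B * (n : ℝ) ^ (-(1 / 4 : ℝ)))
    (q : ℝ) (hq : 2 ≤ q) (Cq : ℝ) (hCq : 0 < Cq)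
    (hconc : ∀ (n : ℕ), 1 ≤ n → ∀ (K : (Fin n → ℝ) → ℝ) (L : Fin n → ℝ), SepLip K L →
      ∫ x, |K (fun i => T^[(i : ℕ)] x)
          - ∫ z, K (fun i => T^[(i : ℕ)] z) ∂μ| ^ q ∂μ
        ≤ Cq * (∑ j, L j ^ 2) ^ (q / 2))
    (P : Measure ℝ) [IsProbabilityMeasure P] (hP : ∀ᵐ ξ ∂P, |ξ| ≤ 1) :
    ∃ Dq : ℝ, 0 < Dq ∧ ∀ ε : ℝ, 0 < ε → ∀ (n : ℕ), 1 ≤ n → ∀ t : ℝ, 0 < t →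
      ((μ.prod (Measure.pi fun _ : Fin n => P))
          {p | (t + B) / (n : ℝ) ^ ((1 : ℝ) / 4) + ε
            < kantorovich (obsEmpirical T ε p) μ}).toReal
        ≤ (Dq * (1 + ε) ^ q / t ^ q) * (n : ℝ) ^ (-(q / 4)) :=
  observed_empirical_measure_speed_polynomial_general X hX T hT hTX μ hμX B hBbound q hq Cq hCq
    hconc P hP
end
end
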